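/- Let d and N be positive integers, let λ₀ ≥ 1 be a real number, and let G₁, …, G_N be real symmetric positive semidefinite d×d matrices, each with all eigenvalues at most 1 (i.e., I − Gₙ is positive semidefinite for each n). Define M₀ = λ₀·I and Mₙ = Mₙ₋₁ + Gₙ for n = 1, …, N. Then 2·log det(M_N) − 2·log det(λ₀·I) ≥ Σ_{n=1}^N trace(Gₙ · Mₙ₋₁⁻¹). -/

import Mathlib

/-!
Whitening by `S = M ^ (1/2)` reduces one step to `M = 1`: with `X = S⁻¹ G S⁻¹` we have
`0 ≤ X ≤ 1` (as `G ≤ 1 ≤ M`), `M + G = S (1 + X) S` and `tr (G M⁻¹) = tr X`, so the step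
inequality `tr (G M⁻¹) ≤ 2 log det (M + G) - 2 log det M` becomes `∑ μᵢ ≤ 2 ∑ log (1 + μᵢ)` over
the eigenvalues `μᵢ ∈ [0, 1]` of `X`, which is `x ≤ 2 log (1 + x)` on `[0, 1]`. Summing the steps
telescopes the right-hand side.
-/

open Matrix Finset
open scoped MatrixOrder

lemma Real.le_two_mul_log_one_add {x : ℝ} (h0 : 0 ≤ x) (h1 : x ≤ 1) :
    x ≤ 2 * Real.log (1 + x) := by
  have hlog := Real.one_sub_inv_le_log_of_pos (by linarith : 0 < 1 + x)
  have hinv : (1 + x)⁻¹ * (1 + x) = 1 := inv_mul_cancel₀ (by linarith)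
  nlinarith

theorem Finset.sum_Icc_one_sub_pred {G : Type*} [AddCommGroup G] (f : ℕ → G) (N : ℕ) :
    ∑ n ∈ Icc 1 N, (f n - f (n - 1)) = f N - f 0 := by
  induction N with
  | zero => simp
  | succ N ih => rw [sum_Icc_succ_top (by omega), ih, Nat.add_sub_cancel]; abel

lemma le_of_eq_pred_add_nonneg {α : Type*} [AddCommMonoid α] [PartialOrder α]
    [IsOrderedAddMonoid α] {M G : ℕ → α} {N : ℕ} (hG : ∀ n ∈ Icc 1 N, 0 ≤ G n)
    (hM : ∀ n ∈ Icc 1 N, M n = M (n - 1) + G n) {k : ℕ} (hk : k ≤ N) : M 0 ≤ M k := by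
  induction k with
  | zero => rfl
  | succ k ih =>
    have hmem : k + 1 ∈ Icc 1 N := mem_Icc.2 ⟨by omega, hk⟩
    rw [hM _ hmem, Nat.add_sub_cancel]
    exact le_add_of_le_of_nonneg (ih (by omega)) (hG _ hmem)

namespace Matrix
variable {n : Type*} [DecidableEq n]

lemma PosDef.of_one_le {A : Matrix n n ℝ} (h : 1 ≤ A) : A.PosDef := by
  simpa using PosDef.one.add_posSemidef h

variable [Fintype n]

lemma IsHermitian.det_cfc {A : Matrix n n ℝ} (hA : A.IsHermitian) (f : ℝ → ℝ) :
    (cfc f A).det = ∏ i, f (hA.eigenvalues i) := by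
  rw [hA.cfc_eq]
  simp [IsHermitian.cfc, -Unitary.conjStarAlgAut_apply]

lemma IsHermitian.det_one_add {A : Matrix n n ℝ} (hA : A.IsHermitian) :
    (1 + A).det = ∏ i, (1 + hA.eigenvalues i) := by
  rw [← hA.det_cfc, cfc_const_add 1 (fun x => x) A, cfc_id' ℝ A, map_one]

lemma PosSemidef.eigenvalues_le_one {A : Matrix n n ℝ} (hA : A.PosSemidef) (h1 : A ≤ 1) (i : n) :
    hA.1.eigenvalues i ≤ 1 :=
  (CFC.le_one_iff A hA.1).mp h1 _ (hA.1.spectrum_real_eq_range_eigenvalues ▸ Set.mem_range_self i)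

lemma PosSemidef.trace_le_two_mul_log_det_one_add {A : Matrix n n ℝ} (hA : A.PosSemidef)
    (h1 : A ≤ 1) : A.trace ≤ 2 * Real.log (1 + A).det := by
  have hpos (i : n) : 0 < 1 + hA.1.eigenvalues i := by linarith [hA.eigenvalues_nonneg i]
  rw [hA.1.trace_eq_sum_eigenvalues, hA.1.det_one_add, Real.log_prod fun i _ => (hpos i).ne',
    mul_sum]
  exact sum_le_sum fun i _ =>
    Real.le_two_mul_log_one_add (hA.eigenvalues_nonneg i) (hA.eigenvalues_le_one h1 i)

lemma PosDef.trace_mul_inv_le_two_mul_log_det_add {M G : Matrix n n ℝ} (hM : M.PosDef)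
    (hG : 0 ≤ G) (hGM : G ≤ M) :
    (G * M⁻¹).trace ≤ 2 * Real.log (M + G).det - 2 * Real.log M.det := by
  set S := CFC.sqrt M
  have hSS : S * S = M := CFC.sqrt_mul_sqrt_self M hM.posSemidef.nonneg
  have hSdet : IsUnit S.det :=
    (isUnit_iff_isUnit_det S).1 ((CFC.isUnit_sqrt_iff M hM.posSemidef.nonneg).2 hM.isUnit)
  have hSinv : IsSelfAdjoint S⁻¹ := (CFC.sqrt_nonneg M).posSemidef.isHermitian.inv
  set X := S⁻¹ * G * S⁻¹
  have hX0 : 0 ≤ X := hSinv.conjugate_nonneg hG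
  have hX1 : X ≤ 1 := calc
    X ≤ S⁻¹ * M * S⁻¹ := hSinv.conjugate_le_conjugate hGM
    _ = 1 := by rw [← hSS, ← mul_assoc, nonsing_inv_mul _ hSdet, one_mul, mul_nonsing_inv _ hSdet]
  have hMG : M + G = S * (1 + X) * S := by
    simp only [X, mul_add, add_mul, mul_one, hSS, ← mul_assoc, mul_nonsing_inv _ hSdet, one_mul]
    rw [mul_assoc, nonsing_inv_mul _ hSdet, mul_one]
  have htr : (G * M⁻¹).trace = X.trace := by
    rw [← hSS, mul_inv_rev, ← mul_assoc, trace_mul_cycle]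
  have hdetM := hM.det_pos
  have hdetX := (PosDef.one.add_posSemidef hX0.posSemidef).det_pos
  have hdet : (M + G).det = M.det * (1 + X).det := by
    rw [hMG, det_mul, det_mul, ← hSS, det_mul]; ring
  rw [htr, hdet, Real.log_mul hdetM.ne' hdetX.ne']
  linarith [hX0.posSemidef.trace_le_two_mul_log_det_one_add hX1]

end Matrix

theorem stmt_1_general (d N : ℕ) (lam0 : ℝ) (hlam0 : 1 ≤ lam0)
    (G M : ℕ → Matrix (Fin d) (Fin d) ℝ)
    (hG : ∀ n ∈ Finset.Icc 1 N, (G n).PosSemidef)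
    (hG1 : ∀ n ∈ Finset.Icc 1 N, ((1 : Matrix (Fin d) (Fin d) ℝ) - G n).PosSemidef)
    (hM0 : M 0 = lam0 • (1 : Matrix (Fin d) (Fin d) ℝ))
    (hMrec : ∀ n ∈ Finset.Icc 1 N, M n = M (n - 1) + G n) :
    ∑ n ∈ Finset.Icc 1 N, Matrix.trace (G n * (M (n - 1))⁻¹)
      ≤ 2 * Real.log (M N).det
        - 2 * Real.log ((lam0 • (1 : Matrix (Fin d) (Fin d) ℝ)).det) := by
  have hM0_ge : 1 ≤ M 0 := by
    rw [hM0, le_iff]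
    simpa [sub_smul] using (PosSemidef.one (n := Fin d) (R := ℝ)).smul (sub_nonneg.2 hlam0)
  have hM_ge (k : ℕ) (hk : k ≤ N) : 1 ≤ M k :=
    hM0_ge.trans (le_of_eq_pred_add_nonneg (fun n hn => (hG n hn).nonneg) hMrec hk)
  have hstep (n : ℕ) (hn : n ∈ Icc 1 N) : (G n * (M (n - 1))⁻¹).trace ≤
      2 * Real.log (M n).det - 2 * Real.log (M (n - 1)).det := by
    have h1 := hM_ge (n - 1) (by grind)
    rw [hMrec n hn]
    exact (PosDef.of_one_le h1).trace_mul_inv_le_two_mul_log_det_add (hG n hn).nonneg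
      ((le_iff.2 (hG1 n hn)).trans h1)
  calc _ ≤ ∑ n ∈ Icc 1 N, (2 * Real.log (M n).det - 2 * Real.log (M (n - 1)).det) :=
        sum_le_sum hstep
    _ = _ := by rw [sum_Icc_one_sub_pred (fun n => 2 * Real.log (M n).det), hM0]

/-- Log-determinant potential lemma (Lemma 14): for `M₀ = λ₀ I` and `Mₙ = Mₙ₋₁ + Gₙ` with
each `Gₙ` PSD with eigenvalues at most 1,
`2 log det M_N - 2 log det (λ₀ I) ≥ Σₙ trace (Gₙ Mₙ₋₁⁻¹)`. -/
theorem stmt_1 (d N : ℕ) (hd : 0 < d) (hN : 0 < N) (lam0 : ℝ) (hlam0 : 1 ≤ lam0)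
    (G M : ℕ → Matrix (Fin d) (Fin d) ℝ)
    (hG : ∀ n ∈ Finset.Icc 1 N, (G n).PosSemidef)
    (hG1 : ∀ n ∈ Finset.Icc 1 N, ((1 : Matrix (Fin d) (Fin d) ℝ) - G n).PosSemidef)
    (hM0 : M 0 = lam0 • (1 : Matrix (Fin d) (Fin d) ℝ))
    (hMrec : ∀ n ∈ Finset.Icc 1 N, M n = M (n - 1) + G n) :
    ∑ n ∈ Finset.Icc 1 N, Matrix.trace (G n * (M (n - 1))⁻¹)
      ≤ 2 * Real.log (M N).det
        - 2 * Real.log ((lam0 • (1 : Matrix (Fin d) (Fin d) ℝ)).det) :=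
  stmt_1_general d N lam0 hlam0 G M hG hG1 hM0 hMrec
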